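/- (i) If j∈A, then ⌊(φ−1)·(⌊φj⌋+1)⌋ = j. (ii) If j∈B, then ⌊φ·⌊(φ−1)j⌋⌋ + 1 = j. (Consequently, the map q with q(0)=0, q(j)=⌊φj⌋+1 for j∈A, q(j)=⌊(φ−1)j⌋ for j∈B is an involution of ℤ≥0.) -/

import Mathlib

/-- The golden ratio φ = (1 + √5)/2. -/
noncomputable def phi : ℝ := (1 + Real.sqrt 5) / 2

/-- The lower Wythoff sequence a(n) = ⌊nφ⌋. -/
noncomputable def wa (n : ℕ) : ℕ := ⌊(n : ℝ) * phi⌋₊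

/-- The upper Wythoff sequence b(n) = ⌊nφ²⌋. -/
noncomputable def wb (n : ℕ) : ℕ := ⌊(n : ℝ) * phi ^ 2⌋₊

/-- A = range of the lower Wythoff sequence. -/
def WA : Set ℕ := {m | ∃ n : ℕ, 0 < n ∧ wa n = m}

/-- B = range of the upper Wythoff sequence. -/
def WB : Set ℕ := {m | ∃ n : ℕ, 0 < n ∧ wb n = m}

open scoped Classical in
/-- q(0) = 0, q(j) = ⌊φj⌋+1 if j ∈ A, q(j) = ⌊(φ−1)j⌋ if j ∈ B. -/
noncomputable def q (j : ℕ) : ℕ :=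
  if j = 0 then 0
  else if j ∈ WA then wa j + 1
  else ⌊(phi - 1) * (j : ℝ)⌋₊

/-!
Write `n * φ = a(n) + δ` with `0 < δ < 1` (`φ` is irrational). Since `φ² = φ + 1`, we have
`b(n) = a(n) + n` and
`(φ - 1)(a(n) + 1) = n + (φ - 1)(1 - δ)`, `(φ - 1) b(n) = a(n) + (2 - φ) δ`,
`φ a(n) = a(n) + n - (φ - 1) δ`,
which give the floors in (i) and (ii) at once; in particular `q` swaps `a(n)` and `b(n)`.
That `q` is an involution then only needs that every positive integer lies in exactly one of
`A` and `B`, which is Rayleigh's theorem for the conjugate exponents `φ` and `φ²`.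
-/

open Real

lemma one_lt_phi : 1 < phi := one_lt_goldenRatio

lemma phi_pos : 0 < phi := goldenRatio_pos

lemma phi_lt_two : phi < 2 := goldenRatio_lt_two

lemma phi_sq : phi ^ 2 = phi + 1 := goldenRatio_sq

lemma irrational_phi : Irrational phi := goldenRatio_irrational

lemma holderConjugate_phi_phi_sq : phi.HolderConjugate (phi ^ 2) := by
  have := phi_pos
  rw [holderConjugate_iff, phi_sq]
  refine ⟨one_lt_phi, ?_⟩
  field_simp
  linarith [phi_sq]

lemma mul_phi_sub_wa_mem_Ioo {n : ℕ} (hn : 0 < n) : (n * phi - wa n : ℝ) ∈ Set.Ioo 0 1 := by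
  have lower : (wa n : ℝ) < n * phi :=
    (Nat.floor_le (mul_nonneg n.cast_nonneg phi_pos.le)).lt_of_ne
      ((irrational_phi.natCast_mul hn.ne').ne_nat _).symm
  have upper : n * phi < wa n + 1 := Nat.lt_floor_add_one _
  constructor <;> linarith

lemma le_wa (n : ℕ) : n ≤ wa n :=
  Nat.le_floor (le_mul_of_one_le_right n.cast_nonneg one_lt_phi.le)

lemma wb_eq_wa_add (n : ℕ) : wb n = wa n + n := by
  rw [wb, phi_sq, mul_add, mul_one, Nat.floor_add_natCast (mul_nonneg n.cast_nonneg phi_pos.le)]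
  rfl

lemma floor_phi_sub_one_mul_wa_add_one {n : ℕ} (hn : 0 < n) :
    ⌊(phi - 1) * ((wa n : ℝ) + 1)⌋ = n := by
  obtain ⟨hδ₀, hδ₁⟩ := mul_phi_sub_wa_mem_Ioo hn
  have key : (phi - 1) * ((wa n : ℝ) + 1) = n + (phi - 1) * (1 - (n * phi - wa n)) := by
    linear_combination (n : ℝ) * phi_sq
  rw [Int.floor_eq_iff, key]
  push_cast
  constructor <;> nlinarith [one_lt_phi, phi_lt_two]

lemma floor_phi_sub_one_mul_wb {n : ℕ} (hn : 0 < n) :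
    ⌊(phi - 1) * (wb n : ℝ)⌋ = wa n := by
  obtain ⟨hδ₀, hδ₁⟩ := mul_phi_sub_wa_mem_Ioo hn
  have key : (phi - 1) * (wb n : ℝ) = wa n + (2 - phi) * (n * phi - wa n) := by
    rw [wb_eq_wa_add]
    push_cast
    linear_combination (n : ℝ) * phi_sq
  rw [Int.floor_eq_iff, key]
  push_cast
  constructor <;> nlinarith [one_lt_phi, phi_lt_two]

lemma floor_phi_mul_wa {n : ℕ} (hn : 0 < n) : ⌊phi * wa n⌋ = wa n + n - 1 := by
  obtain ⟨hδ₀, hδ₁⟩ := mul_phi_sub_wa_mem_Ioo hn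
  have key : phi * wa n = wa n + n - (phi - 1) * (n * phi - wa n) := by
    linear_combination (n : ℝ) * phi_sq
  rw [Int.floor_eq_iff, key]
  push_cast
  constructor <;> nlinarith [one_lt_phi, phi_lt_two]

lemma wa_wa_add_one {n : ℕ} (hn : 0 < n) : wa (wa n) + 1 = wb n := by
  have h := floor_phi_mul_wa hn
  rw [mul_comm, ← Int.natCast_floor_eq_floor (mul_nonneg (Nat.cast_nonneg _) phi_pos.le)] at h
  change (wa (wa n) : ℤ) = _ at h
  rw [wb_eq_wa_add]
  have := le_wa n
  omega

lemma natCast_mem_beattySeq_pos_iff {r : ℝ} (hr : 0 ≤ r) (j : ℕ) :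
    (j : ℤ) ∈ {beattySeq r k | k > 0} ↔ ∃ n : ℕ, 0 < n ∧ ⌊(n : ℝ) * r⌋₊ = j := by
  constructor
  · rintro ⟨k, hk, hkj⟩
    lift k to ℕ using hk.le
    refine ⟨k, by exact_mod_cast hk, ?_⟩
    rw [beattySeq, ← Int.natCast_floor_eq_floor (by positivity)] at hkj
    exact_mod_cast hkj
  · rintro ⟨n, hn, rfl⟩
    refine ⟨n, by exact_mod_cast hn, ?_⟩
    rw [beattySeq, ← Int.natCast_floor_eq_floor (by positivity)]
    rfl

lemma notMem_WA_iff_mem_WB {j : ℕ} (hj : 0 < j) : j ∉ WA ↔ j ∈ WB := by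
  have hjmem : (j : ℤ) ∈ {n : ℤ | 0 < n} := by simpa using hj
  rw [← irrational_phi.beattySeq_symmDiff_beattySeq_pos holderConjugate_phi_phi_sq,
    Set.mem_symmDiff, natCast_mem_beattySeq_pos_iff phi_pos.le,
    natCast_mem_beattySeq_pos_iff (by positivity)] at hjmem
  exact xor_iff_not_iff'.mp hjmem

lemma q_wa {n : ℕ} (hn : 0 < n) : q (wa n) = wb n := by
  have hpos : wa n ≠ 0 := (hn.trans_le (le_wa n)).ne'
  rw [q, if_neg hpos, if_pos ⟨n, hn, rfl⟩, wa_wa_add_one hn]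

lemma q_wb {n : ℕ} (hn : 0 < n) : q (wb n) = wa n := by
  have hpos : 0 < wb n := by rw [wb_eq_wa_add]; omega
  have hA : wb n ∉ WA := (notMem_WA_iff_mem_WB hpos).mpr ⟨n, hn, rfl⟩
  have h := floor_phi_sub_one_mul_wb hn
  rw [← Int.natCast_floor_eq_floor (mul_nonneg (sub_nonneg.2 one_lt_phi.le) (Nat.cast_nonneg _))]
    at h
  rw [q, if_neg hpos.ne', if_neg hA]
  exact_mod_cast h

theorem stmt_19 :
    (∀ j : ℕ, j ∈ WA → ⌊(phi - 1) * ((wa j : ℝ) + 1)⌋ = (j : ℤ)) ∧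
    (∀ j : ℕ, j ∈ WB → ⌊phi * (⌊(phi - 1) * (j : ℝ)⌋ : ℝ)⌋ + 1 = (j : ℤ)) ∧
    (∀ j : ℕ, q (q j) = j) := by
  refine ⟨?_, ?_, ?_⟩
  · rintro j ⟨n, hn, rfl⟩
    exact floor_phi_sub_one_mul_wa_add_one (hn.trans_le (le_wa n))
  · rintro _ ⟨n, hn, rfl⟩
    rw [floor_phi_sub_one_mul_wb hn, Int.cast_natCast, floor_phi_mul_wa hn, wb_eq_wa_add]
    push_cast
    ring
  · intro j
    rcases Nat.eq_zero_or_pos j with rfl | hj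
    · simp [q]
    by_cases hA : j ∈ WA
    · obtain ⟨n, hn, rfl⟩ := hA
      rw [q_wa hn, q_wb hn]
    · obtain ⟨n, hn, rfl⟩ := (notMem_WA_iff_mem_WB hj).mp hA
      rw [q_wb hn, q_wa hn]
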